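/- Let G be a torsion-free abelian group, and let X, Y be random variables taking values in finite subsets of G. Then d_ent(X, 2Y) ≤ 5 d_ent(X, Y), where 2Y denotes the random variable Y + Y (the doubling map applied to Y). -/

import Mathlib

open Finset

noncomputable section

/-- `IsPMF p`: the finitely supported function `p` is a probability mass function,
modelling the distribution of a random variable taking values in a finite subset. -/
def IsPMF {G : Type*} (p : G →₀ ℝ) : Prop :=
  (∀ x, 0 ≤ p x) ∧ ∑ x ∈ p.support, p x = 1

/-- Shannon entropy `H(X)` of a random variable with distribution `p`. -/
def ent {G : Type*} (p : G →₀ ℝ) : ℝ :=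
  ∑ x ∈ p.support, Real.negMulLog (p x)

/-- The joint distribution of a pair of independent random variables with
distributions `p` and `q`. -/
def prodPMF {G H : Type*} (p : G →₀ ℝ) (q : H →₀ ℝ) : (G × H) →₀ ℝ :=
  Finsupp.onFinset (p.support ×ˢ q.support) (fun z => p z.1 * q z.2)
    (fun _z hz => Finset.mem_product.2
      ⟨Finsupp.mem_support_iff.2 (left_ne_zero_of_mul hz),
       Finsupp.mem_support_iff.2 (right_ne_zero_of_mul hz)⟩)

/-- The distribution of `X - Y`, where `X, Y` are independent with distributions `p, q`. -/
def subDist {G : Type*} [AddCommGroup G] (p q : G →₀ ℝ) : G →₀ ℝ :=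
  Finsupp.mapDomain (fun z : G × G => z.1 - z.2) (prodPMF p q)

/-- The distribution of `X + Y`, where `X, Y` are independent with distributions `p, q`. -/
def sumDist {G : Type*} [AddCommGroup G] (p q : G →₀ ℝ) : G →₀ ℝ :=
  Finsupp.mapDomain (fun z : G × G => z.1 + z.2) (prodPMF p q)

/-- The entropic Ruzsa distance `d_ent(X, Y) = H(X' - Y') - H(X)/2 - H(Y)/2`,
where `X', Y'` are independent copies of `X ~ p`, `Y ~ q`. -/
def dEnt {G : Type*} [AddCommGroup G] (p q : G →₀ ℝ) : ℝ :=
  ent (subDist p q) - ent p / 2 - ent q / 2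

/-- The entropic doubling constant `σ_ent[X] = exp(H(X₁ + X₂) - H(X))`
for independent copies `X₁, X₂` of `X ~ p`. -/
def sigmaEnt {G : Type*} [AddCommGroup G] (p : G →₀ ℝ) : ℝ :=
  Real.exp (ent (sumDist p p) - ent p)

/-- First marginal of a joint distribution on `G × H`. -/
def fstMarg {G H : Type*} (w : (G × H) →₀ ℝ) : G →₀ ℝ :=
  Finsupp.mapDomain Prod.fst w

/-- Second marginal of a joint distribution on `G × H`. -/
def sndMarg {G H : Type*} (w : (G × H) →₀ ℝ) : H →₀ ℝ :=
  Finsupp.mapDomain Prod.snd w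

/-- The maximal entropic Ruzsa distance `d*_ent(X, Y)`: the supremum of
`H(X' - Y') - H(X)/2 - H(Y)/2` over all couplings `(X', Y')` of `X ~ p` and `Y ~ q`. -/
def dEntStar {G : Type*} [AddCommGroup G] (p q : G →₀ ℝ) : ℝ :=
  sSup { d : ℝ | ∃ w : (G × G) →₀ ℝ, IsPMF w ∧ fstMarg w = p ∧ sndMarg w = q ∧
    d = ent (Finsupp.mapDomain (fun z : G × G => z.1 - z.2) w) - ent p / 2 - ent q / 2 }

/-- The uniform distribution on a finite set `A`. -/
def unif {G : Type*} [DecidableEq G] (A : Finset G) : G →₀ ℝ :=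
  Finsupp.onFinset A (fun x => if x ∈ A then ((A.card : ℝ))⁻¹ else 0)
    (fun x hx => by by_contra h; exact hx (if_neg h))

/-- The distribution of `X` conditioned on the event `π(X) = y`, where `X ~ p`. -/
def condFiber {G H : Type*} [DecidableEq H] (π : G → H) (y : H) (p : G →₀ ℝ) : G →₀ ℝ :=
  Finsupp.onFinset p.support
    (fun x => if π x = y then p x / (Finsupp.mapDomain π p) y else 0)
    (fun x hx => Finsupp.mem_support_iff.2 (fun h0 => hx (by (try simp only []); split_ifs <;> simp [h0])))

/-- The entropy `h(p)` of the Bernoulli distribution with parameter `p`. -/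
def binEnt (p : ℝ) : ℝ := Real.negMulLog p + Real.negMulLog (1 - p)

/-- Skew-dimension bound: `skewDimLE A r` means the skew-dimension of `A ⊆ ℤ^D`
is at most `r`. -/
def skewDimLE {D : ℕ} : Finset (Fin D → ℤ) → ℕ → Prop
  | A, 0 => A.card ≤ 1
  | A, r + 1 => A.card ≤ 1 ∨ ∃ i : Fin D, ∀ n : ℤ,
      skewDimLE (A.filter fun v => v i = n) r

/-- The (affine) dimension of a finite subset `A ⊆ ℤ^D`: the dimension of the
real span of `A - A`. -/
def dimAff {D : ℕ} (A : Finset (Fin D → ℤ)) : ℕ :=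
  Module.finrank ℝ (Submodule.span ℝ
    { x : Fin D → ℝ | ∃ a ∈ A, ∃ b ∈ A, x = fun i => ((a i : ℝ) - (b i : ℝ)) })


/-- `AddMonoid.IsTorsionFree G`: no nonzero element of `G` has finite additive order
(the Mathlib definition of December 2024, since removed). -/
def AddMonoid.IsTorsionFree (G : Type*) [AddMonoid G] : Prop :=
  ∀ g : G, g ≠ 0 → ¬IsOfFinAddOrder g

/-!
Let `X ~ p` and `Y, Z ~ q` be independent. Shannon's inequalities give `H[Y] ≤ H[X - Y]`, the
entropic Ruzsa triangle inequality `H[Y - Z] + H[X] ≤ H[X - Y] + H[X - Z]`, and likewise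
`H[X - Y - Z] + H[X] ≤ H[X - Y] + H[X - Z]`. As doubling is injective in a torsion-free group,
`(X - 2Z, X, Y)` determines `(X, Y, Z)`, while `(X - 2Z, X - 2Y)` is a function of
`(X - Y - Z, Y - Z)`; so comparing the entropy of `X - 2Z` conditioned on `(X, Y)` and on `X - 2Y`
gives `H[X - 2Y] + H[Z] ≤ H[X - Y - Z] + H[Y - Z]`. Adding up,
`H[X - 2Y] ≤ 4 H[X - Y] - 2 H[X] - H[Y]`, which together with `H[2Y] = H[Y] ≤ H[X - Y]` is
`d(X, 2Y) ≤ 5 d(X, Y)`.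
-/

section

variable {Ω α β γ : Type*}

lemma Finsupp.mapDomain_apply_eq_sum_filter {M : Type*} [AddCommMonoid M] [DecidableEq β]
    (f : α → β) (w : α →₀ M) (b : β) :
    w.mapDomain f b = ∑ a ∈ w.support with f a = b, w a := by
  simp [Finsupp.mapDomain, Finsupp.sum, Finsupp.single_apply, Finset.sum_ite]

namespace IsPMF

variable {w : Ω →₀ ℝ}

lemma pos_of_mem_support (hw : IsPMF w) {a : Ω} (ha : a ∈ w.support) : 0 < w a :=
  (hw.1 a).lt_of_ne' (Finsupp.mem_support_iff.1 ha)

lemma mapDomain (hw : IsPMF w) (f : Ω → α) : IsPMF (w.mapDomain f) := by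
  refine ⟨fun b => Finsupp.mapDomain_nonneg (fun a => hw.1 a) b, ?_⟩
  have := Finsupp.sum_mapDomain_index (f := f) (s := w) (h := fun _ c => c)
    (fun _ => rfl) (fun _ _ _ => rfl)
  simpa only [Finsupp.sum, hw.2] using this

lemma le_mapDomain_apply (hw : IsPMF w) (f : Ω → α) {a : Ω} (ha : a ∈ w.support) :
    w a ≤ w.mapDomain f (f a) := by
  classical
  rw [Finsupp.mapDomain_apply_eq_sum_filter]
  exact Finset.single_le_sum (fun i _ => hw.1 i) (Finset.mem_filter.2 ⟨ha, rfl⟩)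

lemma mapDomain_apply_pos (hw : IsPMF w) (f : Ω → α) {a : Ω} (ha : a ∈ w.support) :
    0 < w.mapDomain f (f a) :=
  (hw.pos_of_mem_support ha).trans_le (hw.le_mapDomain_apply f ha)

end IsPMF

lemma ent_mapDomain (f : Ω → α) (w : Ω →₀ ℝ) :
    ent (w.mapDomain f) = ∑ a ∈ w.support, -(w a * Real.log (w.mapDomain f (f a))) := by
  classical
  rw [← Finset.sum_fiberwise_of_maps_to (fun a ha => Finset.mem_image_of_mem f ha), ent]
  refine (Finset.sum_subset Finsupp.mapDomain_support fun b _ hb => ?_).trans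
    (Finset.sum_congr rfl fun b _ => ?_)
  · rw [Finsupp.notMem_support_iff.1 hb, Real.negMulLog_zero]
  · rw [Finset.sum_congr rfl fun a ha => by rw [(Finset.mem_filter.1 ha).2],
      Finset.sum_neg_distrib, ← Finset.sum_mul, ← Finsupp.mapDomain_apply_eq_sum_filter f w b,
      Real.negMulLog, neg_mul]

lemma ent_eq_sum (w : Ω →₀ ℝ) : ent w = ∑ a ∈ w.support, -(w a * Real.log (w a)) := by
  simp only [ent, Real.negMulLog, neg_mul]

lemma ent_mapDomain_of_injective {f : Ω → α} (hf : Function.Injective f) (w : Ω →₀ ℝ) :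
    ent (w.mapDomain f) = ent w := by
  rw [ent_mapDomain, ent_eq_sum]
  simp only [Finsupp.mapDomain_apply hf]

lemma ent_mapDomain_le {w : Ω →₀ ℝ} (hw : IsPMF w) (f : Ω → α) :
    ent (w.mapDomain f) ≤ ent w := by
  rw [ent_mapDomain, ent_eq_sum]
  refine Finset.sum_le_sum fun a ha => neg_le_neg (mul_le_mul_of_nonneg_left ?_ (hw.1 a))
  exact Real.log_le_log (hw.pos_of_mem_support ha) (hw.le_mapDomain_apply f ha)

lemma ent_le_sum_neg_mul_log {w : Ω →₀ ℝ} (hw : IsPMF w) {F : Ω → ℝ}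
    (hF : ∀ a ∈ w.support, 0 < F a) (hsum : ∑ a ∈ w.support, F a ≤ 1) :
    ent w ≤ ∑ a ∈ w.support, -(w a * Real.log (F a)) := by
  have pointwise : ∀ a ∈ w.support,
      -(w a * Real.log (w a)) - -(w a * Real.log (F a)) ≤ F a - w a := by
    intro a ha
    have hwa := hw.pos_of_mem_support ha
    have hlog := Real.log_le_sub_one_of_pos (div_pos (hF a ha) hwa)
    rw [Real.log_div (hF a ha).ne' hwa.ne', le_sub_iff_add_le, div_eq_mul_inv] at hlog
    have := mul_le_mul_of_nonneg_left hlog hwa.le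
    rw [mul_comm (F a), ← mul_assoc, mul_inv_cancel₀ hwa.ne', one_mul] at this
    linarith
  have := Finset.sum_le_sum pointwise
  rw [Finset.sum_sub_distrib, Finset.sum_sub_distrib, hw.2] at this
  rw [ent_eq_sum]
  linarith

lemma sum_apply_le_mapDomain_snd {m : α × β →₀ ℝ} (hm : ∀ u, 0 ≤ m u)
    (A : Finset α) (b : β) :
    ∑ a ∈ A, m (a, b) ≤ m.mapDomain Prod.snd b := by
  classical
  calc ∑ a ∈ A, m (a, b) = ∑ u ∈ A ×ˢ {b} with m u ≠ 0, m u := by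
        rw [Finset.sum_filter_ne_zero, Finset.sum_product, Finset.sum_congr rfl fun a _ =>
          Finset.sum_singleton (fun b => m (a, b)) b]
    _ ≤ ∑ u ∈ m.support with u.2 = b, m u := by
        refine Finset.sum_le_sum_of_subset_of_nonneg (fun u hu => ?_) fun u _ _ => hm u
        simp only [Finset.mem_filter, Finset.mem_product, Finset.mem_singleton] at hu
        exact Finset.mem_filter.2 ⟨Finsupp.mem_support_iff.2 hu.2, hu.1.2⟩
    _ = m.mapDomain Prod.snd b := (Finsupp.mapDomain_apply_eq_sum_filter Prod.snd m b).symm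

/-- The summand is the law of the coupling of `(z.1, z.2.1)` and `z.2` that is conditionally
independent over `z.2.1`. -/
lemma sum_condIndep_coupling_le_one {r : α × β × γ →₀ ℝ} (hr : IsPMF r) :
    ∑ z ∈ r.support, r.mapDomain (fun z => (z.1, z.2.1)) (z.1, z.2.1) * r.mapDomain Prod.snd z.2
      / r.mapDomain (fun z => z.2.1) z.2.1 ≤ 1 := by
  classical
  set m12 := r.mapDomain fun z => (z.1, z.2.1)
  set m23 := r.mapDomain Prod.snd
  set m2 := r.mapDomain fun z => z.2.1
  have hm2_12 : m2 = m12.mapDomain Prod.snd := by rw [← Finsupp.mapDomain_comp]; rfl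
  have hm2_23 : m2 = m23.mapDomain Prod.fst := by rw [← Finsupp.mapDomain_comp]; rfl
  have hm23 : IsPMF m23 := hr.mapDomain _
  set A := r.support.image Prod.fst
  calc _ ≤ ∑ z ∈ A ×ˢ m23.support, m12 (z.1, z.2.1) * m23 z.2 / m2 z.2.1 := by
        refine Finset.sum_le_sum_of_subset_of_nonneg (fun z hz => ?_) fun z _ _ => ?_
        · exact Finset.mem_product.2 ⟨Finset.mem_image_of_mem _ hz,
            Finsupp.mem_support_iff.2 (hr.mapDomain_apply_pos Prod.snd hz).ne'⟩
        · exact div_nonneg (mul_nonneg ((hr.mapDomain _).1 _) (hm23.1 _)) ((hr.mapDomain _).1 _)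
    _ = ∑ bc ∈ m23.support, (∑ a ∈ A, m12 (a, bc.1)) * (m23 bc / m2 bc.1) := by
        rw [Finset.sum_product, Finset.sum_comm]
        simp only [Finset.sum_mul, mul_div_assoc]
    _ ≤ ∑ bc ∈ m23.support, m2 bc.1 * (m23 bc / m2 bc.1) := by
        gcongr with bc hbc
        · exact div_nonneg (hm23.1 _) ((hr.mapDomain _).1 _)
        · rw [hm2_12]; exact sum_apply_le_mapDomain_snd (hr.mapDomain _).1 A bc.1
    _ = ∑ bc ∈ m23.support, m23 bc := by
        refine Finset.sum_congr rfl fun bc hbc => mul_div_cancel₀ _ ?_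
        rw [hm2_23]; exact (hm23.mapDomain_apply_pos Prod.fst hbc).ne'
    _ = 1 := hm23.2

lemma ent_triple_add_ent_le {r : α × β × γ →₀ ℝ} (hr : IsPMF r) :
    ent r + ent (r.mapDomain fun z => z.2.1)
      ≤ ent (r.mapDomain fun z => (z.1, z.2.1)) + ent (r.mapDomain Prod.snd) := by
  set m12 := r.mapDomain fun z => (z.1, z.2.1)
  set m23 := r.mapDomain Prod.snd
  set m2 := r.mapDomain fun z => z.2.1
  have hpos (z) (hz : z ∈ r.support) : 0 < m12 (z.1, z.2.1) ∧ 0 < m23 z.2 ∧ 0 < m2 z.2.1 :=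
    ⟨hr.mapDomain_apply_pos _ hz, hr.mapDomain_apply_pos _ hz, hr.mapDomain_apply_pos _ hz⟩
  have gibbs := ent_le_sum_neg_mul_log hr
    (fun z hz => by obtain ⟨h12, h23, h2⟩ := hpos z hz; positivity)
    (sum_condIndep_coupling_le_one hr)
  have split : ∀ z ∈ r.support, -(r z * Real.log (m12 (z.1, z.2.1) * m23 z.2 / m2 z.2.1))
      = -(r z * Real.log (m12 (z.1, z.2.1))) + -(r z * Real.log (m23 z.2))
        - -(r z * Real.log (m2 z.2.1)) := fun z hz => by
    obtain ⟨h12, h23, h2⟩ := hpos z hz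
    rw [Real.log_div (by positivity) h2.ne', Real.log_mul h12.ne' h23.ne']
    ring
  rw [Finset.sum_congr rfl split, Finset.sum_sub_distrib, Finset.sum_add_distrib] at gibbs
  rw [ent_mapDomain, ent_mapDomain, ent_mapDomain]
  linarith

/-- Random variables are functions on a sample space `Ω` with law `w`; `rvEnt w X` is `H[X]`. -/
def rvEnt (w : Ω →₀ ℝ) (X : Ω → α) : ℝ := ent (w.mapDomain X)

section ShannonInequalities

variable {w : Ω →₀ ℝ}

lemma rvEnt_comp (f : α → β) (X : Ω → α) :
    rvEnt w (fun ω => f (X ω)) = rvEnt (w.mapDomain X) f := by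
  rw [rvEnt, rvEnt, ← Finsupp.mapDomain_comp]; rfl

lemma rvEnt_le_of_comp (hw : IsPMF w) {X : Ω → α} {Y : Ω → β} (f : β → α)
    (hXY : ∀ ω, X ω = f (Y ω)) : rvEnt w X ≤ rvEnt w Y := by
  rw [funext hXY, rvEnt_comp, rvEnt]
  exact ent_mapDomain_le (hw.mapDomain Y) f

lemma rvEnt_congr_of_injective {X : Ω → β} {Y : Ω → α} {e : α → β}
    (he : Function.Injective e) (hXY : ∀ ω, X ω = e (Y ω)) : rvEnt w X = rvEnt w Y := by
  rw [funext hXY, rvEnt_comp, rvEnt, ent_mapDomain_of_injective he, rvEnt]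

lemma rvEnt_const (hw : IsPMF w) (c : α) : rvEnt w (fun _ => c) = 0 := by
  classical
  have hmass : w.mapDomain (fun _ => c) c = 1 := by
    rw [Finsupp.mapDomain_apply_eq_sum_filter, Finset.filter_true_of_mem fun _ _ => rfl, hw.2]
  simp [rvEnt, ent_mapDomain, hmass]

lemma rvEnt_triple_add_rvEnt_le (hw : IsPMF w) (X : Ω → α) (Y : Ω → β) (Z : Ω → γ) :
    rvEnt w (fun ω => (X ω, Y ω, Z ω)) + rvEnt w Y
      ≤ rvEnt w (fun ω => (X ω, Y ω)) + rvEnt w (fun ω => (Y ω, Z ω)) := by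
  simpa only [rvEnt, ← Finsupp.mapDomain_comp, Function.comp_def] using
    ent_triple_add_ent_le (hw.mapDomain fun ω => (X ω, Y ω, Z ω))

lemma rvEnt_pair_le_add (hw : IsPMF w) (X : Ω → α) (Y : Ω → β) :
    rvEnt w (fun ω => (X ω, Y ω)) ≤ rvEnt w X + rvEnt w Y := by
  have key := rvEnt_triple_add_rvEnt_le hw X (fun _ => ()) Y
  have h₁ : rvEnt w (fun ω => (X ω, Y ω)) ≤ rvEnt w (fun ω => (X ω, (), Y ω)) :=
    rvEnt_le_of_comp hw (fun u => (u.1, u.2.2)) fun _ => rfl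
  have h₂ : rvEnt w (fun ω => (X ω, ())) ≤ rvEnt w X :=
    rvEnt_le_of_comp hw (fun a => (a, ())) fun _ => rfl
  have h₃ : rvEnt w (fun ω => ((), Y ω)) ≤ rvEnt w Y :=
    rvEnt_le_of_comp hw (fun b => ((), b)) fun _ => rfl
  rw [rvEnt_const hw] at key
  linarith

/-- `H[X | Z] ≤ H[X | ρ ∘ Z]` -/
lemma rvEnt_pair_add_rvEnt_comp_le (hw : IsPMF w) (X : Ω → α) (Z : Ω → γ) (ρ : γ → β) :
    rvEnt w (fun ω => (X ω, Z ω)) + rvEnt w (fun ω => ρ (Z ω))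
      ≤ rvEnt w (fun ω => (X ω, ρ (Z ω))) + rvEnt w Z := by
  have key := rvEnt_triple_add_rvEnt_le hw X (fun ω => ρ (Z ω)) Z
  have h₁ : rvEnt w (fun ω => (X ω, Z ω)) ≤ rvEnt w (fun ω => (X ω, ρ (Z ω), Z ω)) :=
    rvEnt_le_of_comp hw (fun u => (u.1, u.2.2)) fun _ => rfl
  have h₂ : rvEnt w (fun ω => (ρ (Z ω), Z ω)) ≤ rvEnt w Z :=
    rvEnt_le_of_comp hw (fun c => (ρ c, c)) fun _ => rfl
  linarith

lemma rvEnt_pair_eq_add_of_rvEnt_triple_eq_add (hw : IsPMF w)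
    {X : Ω → α} {Y : Ω → β} {Z : Ω → γ}
    (hind : rvEnt w (fun ω => (X ω, Y ω, Z ω)) = rvEnt w X + rvEnt w Y + rvEnt w Z) :
    rvEnt w (fun ω => (X ω, Y ω)) = rvEnt w X + rvEnt w Y := by
  have h₁ := rvEnt_pair_le_add hw (fun ω => (X ω, Y ω)) Z
  have h₂ := rvEnt_pair_le_add hw X Y
  have h₃ : rvEnt w (fun ω => (X ω, Y ω, Z ω)) ≤ rvEnt w (fun ω => ((X ω, Y ω), Z ω)) :=
    rvEnt_le_of_comp hw (fun u => (u.1.1, u.1.2, u.2)) fun _ => rfl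
  linarith

end ShannonInequalities

section RuzsaInequalities

variable {G : Type*} [AddCommGroup G] {w : Ω →₀ ℝ} {X Y Z : Ω → G}

lemma rvEnt_le_rvEnt_sub (hw : IsPMF w)
    (hind : rvEnt w (fun ω => (X ω, Y ω)) = rvEnt w X + rvEnt w Y) :
    rvEnt w Y ≤ rvEnt w (fun ω => X ω - Y ω) := by
  have h₁ := rvEnt_pair_le_add hw (fun ω => X ω - Y ω) X
  have h₂ : rvEnt w (fun ω => (X ω, Y ω)) ≤ rvEnt w (fun ω => (X ω - Y ω, X ω)) :=
    rvEnt_le_of_comp hw (fun u => (u.2, u.2 - u.1)) fun _ => by simp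
  linarith

lemma rvEnt_sub_add_rvEnt_le (hw : IsPMF w)
    (hind : rvEnt w (fun ω => (X ω, Y ω, Z ω)) = rvEnt w X + rvEnt w Y + rvEnt w Z) :
    rvEnt w (fun ω => Y ω - Z ω) + rvEnt w X
      ≤ rvEnt w (fun ω => X ω - Y ω) + rvEnt w (fun ω => X ω - Z ω) := by
  have key := rvEnt_pair_add_rvEnt_comp_le hw (fun ω => X ω - Y ω) (fun ω => (Y ω, Z ω))
    fun u => u.1 - u.2
  have h₁ : rvEnt w (fun ω => (X ω, Y ω, Z ω))
      ≤ rvEnt w (fun ω => (X ω - Y ω, Y ω, Z ω)) :=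
    rvEnt_le_of_comp hw (fun u => (u.1 + u.2.1, u.2)) fun _ => by simp
  have h₂ : rvEnt w (fun ω => (X ω - Y ω, Y ω - Z ω))
      ≤ rvEnt w (fun ω => (X ω - Y ω, X ω - Z ω)) :=
    rvEnt_le_of_comp hw (fun u => (u.1, u.2 - u.1)) fun _ => by simp
  have h₃ := rvEnt_pair_le_add hw Y Z
  have h₄ := rvEnt_pair_le_add hw (fun ω => X ω - Y ω) (fun ω => X ω - Z ω)
  linarith

lemma rvEnt_sub_sub_add_rvEnt_le (hw : IsPMF w)
    (hind : rvEnt w (fun ω => (X ω, Y ω, Z ω)) = rvEnt w X + rvEnt w Y + rvEnt w Z) :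
    rvEnt w (fun ω => X ω - Y ω - Z ω) + rvEnt w X
      ≤ rvEnt w (fun ω => X ω - Y ω) + rvEnt w (fun ω => X ω - Z ω) := by
  have key := rvEnt_pair_add_rvEnt_comp_le hw (fun ω => (X ω - Z ω, Y ω))
    (fun ω => (X ω - Y ω, Z ω)) fun u => u.1 - u.2
  have h₁ : rvEnt w (fun ω => (X ω, Y ω, Z ω))
      ≤ rvEnt w (fun ω => ((X ω - Z ω, Y ω), (X ω - Y ω, Z ω))) :=
    rvEnt_le_of_comp hw (fun u => (u.1.1 + u.2.2, u.1.2, u.2.2)) fun _ => by simp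
  have h₂ : rvEnt w (fun ω => ((X ω - Z ω, Y ω), X ω - Y ω - Z ω))
      ≤ rvEnt w (fun ω => (X ω - Z ω, Y ω)) :=
    rvEnt_le_of_comp hw (fun u => (u, u.1 - u.2)) fun _ => by simp [sub_right_comm]
  have h₃ := rvEnt_pair_le_add hw (fun ω => X ω - Z ω) Y
  have h₄ := rvEnt_pair_le_add hw (fun ω => X ω - Y ω) Z
  linarith

lemma rvEnt_sub_add_self_add_rvEnt_le (hw : IsPMF w)
    (hdbl : Function.Injective fun g : G => g + g)
    (hind : rvEnt w (fun ω => (X ω, Y ω, Z ω)) = rvEnt w X + rvEnt w Y + rvEnt w Z) :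
    rvEnt w (fun ω => X ω - (Y ω + Y ω)) + rvEnt w Z
      ≤ rvEnt w (fun ω => X ω - Y ω - Z ω) + rvEnt w (fun ω => Y ω - Z ω) := by
  have key := rvEnt_pair_add_rvEnt_comp_le hw (fun ω => X ω - (Z ω + Z ω))
    (fun ω => (X ω, Y ω)) fun u => u.1 - (u.2 + u.2)
  have hinj : Function.Injective fun u : G × G × G => (u.1 - (u.2.2 + u.2.2), u.1, u.2.1) := by
    rintro u v h
    simp only [Prod.mk.injEq] at h
    obtain ⟨h₁, h₂, h₃⟩ := h
    exact Prod.ext h₂ (Prod.ext h₃ (hdbl (by simpa [h₂] using h₁)))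
  have h₁ : rvEnt w (fun ω => (X ω - (Z ω + Z ω), X ω, Y ω))
      = rvEnt w (fun ω => (X ω, Y ω, Z ω)) :=
    rvEnt_congr_of_injective hinj fun _ => rfl
  have h₂ : rvEnt w (fun ω => (X ω - (Z ω + Z ω), X ω - (Y ω + Y ω)))
      ≤ rvEnt w (fun ω => (X ω - Y ω - Z ω, Y ω - Z ω)) :=
    rvEnt_le_of_comp hw (fun u => (u.1 + u.2, u.1 - u.2)) fun _ => by ext <;> simp <;> abel
  have h₃ := rvEnt_pair_le_add hw X Y
  have h₄ := rvEnt_pair_le_add hw (fun ω => X ω - Y ω - Z ω) (fun ω => Y ω - Z ω)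
  linarith

end RuzsaInequalities

section ProductDistribution

variable {p : α →₀ ℝ} {q : β →₀ ℝ} {r : γ →₀ ℝ}

lemma prodPMF_apply (p : α →₀ ℝ) (q : β →₀ ℝ) (z : α × β) :
    prodPMF p q z = p z.1 * q z.2 := rfl

lemma prodPMF_support (p : α →₀ ℝ) (q : β →₀ ℝ) :
    (prodPMF p q).support = p.support ×ˢ q.support := by
  ext z
  simp [prodPMF_apply, Finsupp.mem_support_iff]

lemma IsPMF.prodPMF (hp : IsPMF p) (hq : IsPMF q) : IsPMF (prodPMF p q) := by
  refine ⟨fun z => mul_nonneg (hp.1 z.1) (hq.1 z.2), ?_⟩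
  simp only [prodPMF_support, Finset.sum_product, prodPMF_apply, ← Finset.mul_sum, hq.2, mul_one,
    hp.2]

lemma ent_prodPMF (hp : IsPMF p) (hq : IsPMF q) : ent (prodPMF p q) = ent p + ent q := by
  simp only [ent, prodPMF_support, Finset.sum_product, prodPMF_apply, Real.negMulLog_mul,
    Finset.sum_add_distrib, ← Finset.mul_sum, ← Finset.sum_mul, hp.2, hq.2, one_mul]

lemma mapDomain_prodMap_prodPMF (φ : α → γ) (ψ : β → Ω) (p : α →₀ ℝ) (q : β →₀ ℝ) :
    (prodPMF p q).mapDomain (Prod.map φ ψ) = prodPMF (p.mapDomain φ) (q.mapDomain ψ) := by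
  classical
  ext z
  simp only [Finsupp.mapDomain_apply_eq_sum_filter, prodPMF_support, Prod.map, Prod.ext_iff,
    prodPMF_apply]
  rw [Finset.filter_product (fun a => φ a = z.1) (fun b => ψ b = z.2), Finset.sum_product,
    Finset.sum_mul_sum]

lemma mapDomain_fst_prodPMF (hq : IsPMF q) : (prodPMF p q).mapDomain Prod.fst = p := by
  classical
  ext a
  rw [Finsupp.mapDomain_apply_eq_sum_filter, prodPMF_support,
    Finset.filter_product_left (fun x => x = a), Finset.sum_product]
  simp [prodPMF_apply, ← Finset.mul_sum, hq.2, Finset.sum_filter, eq_comm]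

lemma mapDomain_snd_prodPMF (hp : IsPMF p) : (prodPMF p q).mapDomain Prod.snd = q := by
  classical
  ext b
  rw [Finsupp.mapDomain_apply_eq_sum_filter, prodPMF_support,
    Finset.filter_product_right (fun y => y = b), Finset.sum_product_right]
  simp [prodPMF_apply, ← Finset.sum_mul, hp.2, Finset.sum_filter, eq_comm]

lemma rvEnt_coords_prodPMF_prodPMF (hp : IsPMF p) (hq : IsPMF q) (hr : IsPMF r) :
    rvEnt (prodPMF p (prodPMF q r)) Prod.fst = ent p ∧
      rvEnt (prodPMF p (prodPMF q r)) (fun ω => ω.2.1) = ent q ∧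
      rvEnt (prodPMF p (prodPMF q r)) (fun ω => ω.2.2) = ent r := by
  refine ⟨congrArg ent (mapDomain_fst_prodPMF (hq.prodPMF hr)), ?_, ?_⟩
  · rw [rvEnt_comp, mapDomain_snd_prodPMF hp, rvEnt, mapDomain_fst_prodPMF hr]
  · rw [rvEnt_comp, mapDomain_snd_prodPMF hp, rvEnt, mapDomain_snd_prodPMF hq]

lemma rvEnt_triple_prodPMF_prodPMF (hp : IsPMF p) (hq : IsPMF q) (hr : IsPMF r) :
    rvEnt (prodPMF p (prodPMF q r)) (fun ω => (ω.1, ω.2.1, ω.2.2))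
      = rvEnt (prodPMF p (prodPMF q r)) Prod.fst
        + rvEnt (prodPMF p (prodPMF q r)) (fun ω => ω.2.1)
        + rvEnt (prodPMF p (prodPMF q r)) (fun ω => ω.2.2) := by
  obtain ⟨hX, hY, hZ⟩ := rvEnt_coords_prodPMF_prodPMF hp hq hr
  change ent ((prodPMF p (prodPMF q r)).mapDomain id) = _
  rw [Finsupp.mapDomain_id, ent_prodPMF hp (hq.prodPMF hr), ent_prodPMF hq hr, hX, hY, hZ,
    add_assoc]

end ProductDistribution

section SubDistOfTripleProduct

variable {G : Type*} [AddCommGroup G] {p : G →₀ ℝ} {q : β →₀ ℝ} {r : γ →₀ ℝ}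

lemma rvEnt_fst_sub_snd_fst_prodPMF (hr : IsPMF r) (φ : β → G) :
    rvEnt (prodPMF p (prodPMF q r)) (fun ω => ω.1 - φ ω.2.1)
      = ent (subDist p (q.mapDomain φ)) := by
  have : (prodPMF p (prodPMF q r)).mapDomain (Prod.map id (φ ∘ Prod.fst))
      = prodPMF p (q.mapDomain φ) := by
    rw [mapDomain_prodMap_prodPMF, Finsupp.mapDomain_id, Finsupp.mapDomain_comp,
      mapDomain_fst_prodPMF hr]
  rw [subDist, ← this, ← Finsupp.mapDomain_comp]
  rfl

lemma rvEnt_fst_sub_snd_snd_prodPMF (hq : IsPMF q) (ψ : γ → G) :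
    rvEnt (prodPMF p (prodPMF q r)) (fun ω => ω.1 - ψ ω.2.2)
      = ent (subDist p (r.mapDomain ψ)) := by
  have : (prodPMF p (prodPMF q r)).mapDomain (Prod.map id (ψ ∘ Prod.snd))
      = prodPMF p (r.mapDomain ψ) := by
    rw [mapDomain_prodMap_prodPMF, Finsupp.mapDomain_id, Finsupp.mapDomain_comp,
      mapDomain_snd_prodPMF hq]
  rw [subDist, ← this, ← Finsupp.mapDomain_comp]
  rfl

end SubDistOfTripleProduct

end

lemma AddMonoid.IsTorsionFree.add_self_injective {G : Type*} [AddCommGroup G]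
    (hG : AddMonoid.IsTorsionFree G) : Function.Injective fun g : G => g + g := by
  intro a b (hab : a + a = b + b)
  by_contra hne
  refine hG (a - b) (sub_ne_zero.2 hne) (isOfFinAddOrder_iff_nsmul_eq_zero.2 ⟨2, two_pos, ?_⟩)
  rw [two_nsmul, sub_add_sub_comm, hab, sub_self]

/-- Let `G` be a torsion-free abelian group and let `X ~ p`, `Y ~ q` be
random variables taking values in finite subsets of `G`. Then
`d_ent(X, 2Y) ≤ 5 d_ent(X, Y)`, where `2Y` is the image of `Y` under `g ↦ g + g`. -/
theorem statement16 {G : Type*} [AddCommGroup G] (hG : AddMonoid.IsTorsionFree G)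
    (p q : G →₀ ℝ) (hp : IsPMF p) (hq : IsPMF q) :
    dEnt p (Finsupp.mapDomain (fun g : G => g + g) q) ≤ 5 * dEnt p q := by
  have hdbl := hG.add_self_injective
  have hw : IsPMF (prodPMF p (prodPMF q q)) := hp.prodPMF (hq.prodPMF hq)
  obtain ⟨hX, hY, hZ⟩ := rvEnt_coords_prodPMF_prodPMF hp hq hq
  have hind := rvEnt_triple_prodPMF_prodPMF hp hq hq
  have hXY := rvEnt_fst_sub_snd_fst_prodPMF (p := p) (q := q) hq id
  have hXZ := rvEnt_fst_sub_snd_snd_prodPMF (p := p) (r := q) hq id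
  have hX2Y := rvEnt_fst_sub_snd_fst_prodPMF (p := p) (q := q) hq fun g => g + g
  simp only [id, Finsupp.mapDomain_id] at hXY hXZ
  have hdouble := rvEnt_sub_add_self_add_rvEnt_le hw hdbl hind
  have hsubsub := rvEnt_sub_sub_add_rvEnt_le hw hind
  have htriangle := rvEnt_sub_add_rvEnt_le hw hind
  have hmono := rvEnt_le_rvEnt_sub hw (rvEnt_pair_eq_add_of_rvEnt_triple_eq_add hw hind)
  rw [dEnt, dEnt, ent_mapDomain_of_injective hdbl]
  linarith
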